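/- Let G ∈ G* be a 2-connected graph, and let C be a longest odd cycle of G with |C| ≥ 5. For a vertex v outside C, let T(v) denote the set of vertices w ∈ C such that some v,w-path meets C only at w. Then T(v) is a clique in G. -/

import Mathlib

open SimpleGraph

/-- Adjacency in the line graph `L(G)`: two distinct edges sharing an endpoint. -/
def lineAdj {V : Type*} (G : SimpleGraph V) (e f : G.edgeSet) : Prop :=
  e ≠ f ∧ ∃ x : V, x ∈ (e : Sym2 V) ∧ x ∈ (f : Sym2 V)

/-- `D` is an orientation of the (loopless) adjacency relation `Adj`:
every arc of `D` is an edge, and every edge gets at least one of its two arcs. -/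
def IsOrientation {α : Type*} (Adj : α → α → Prop) (D : α → α → Prop) : Prop :=
  (∀ a b, D a b → Adj a b) ∧ (∀ a b, Adj a b → D a b ∨ D b a)

/-- A digraph (relation) is kernel-perfect if every induced subdigraph has a kernel:
an independent set `S` such that every vertex outside `S` has an out-neighbor in `S`. -/
def KernelPerfect {α : Type*} (D : α → α → Prop) : Prop :=
  ∀ Z : Set α, ∃ S ⊆ Z, (∀ a ∈ S, ∀ b ∈ S, ¬ D a b) ∧
    ∀ z ∈ Z, z ∉ S → ∃ s ∈ S, D z s

/-- Out-degree of a vertex in a digraph given as a relation. -/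
noncomputable def outDeg {α : Type*} (D : α → α → Prop) (a : α) : ℕ := {b | D a b}.ncard

/-- Degree of a vertex. -/
noncomputable def deg {V : Type*} (G : SimpleGraph V) (v : V) : ℕ := (G.neighborSet v).ncard

/-- Maximum degree. -/
noncomputable def maxDeg {V : Type*} (G : SimpleGraph V) : ℕ := sSup (Set.range (deg G))

/-- `G` is `f`-edge-orientable: `L(G)` admits a kernel-perfect orientation with
`1 + d⁺(e) ≤ f e` for every edge `e`. -/
def EdgeOrientable {V : Type*} (G : SimpleGraph V) (f : G.edgeSet → ℕ) : Prop :=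
  ∃ D : G.edgeSet → G.edgeSet → Prop,
    IsOrientation (lineAdj G) D ∧ KernelPerfect D ∧ ∀ e, outDeg D e + 1 ≤ f e

open Classical in
/-- The function `f_{k,v}`: `deg v` on edges incident to `v`, and `k` elsewhere. -/
noncomputable def fkv {V : Type*} (G : SimpleGraph V) (k : ℕ) (v : V) (e : G.edgeSet) : ℕ :=
  if v ∈ (e : Sym2 V) then deg G v else k

/-- `G` is strongly `k`-edge-orientable. -/
def StronglyEdgeOrientable {V : Type*} (G : SimpleGraph V) (k : ℕ) : Prop :=
  ∀ v : V, EdgeOrientable G (fkv G k v)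

/-- `G` is `f`-edge-choosable. -/
def FEdgeChoosable {V : Type*} (G : SimpleGraph V) (f : G.edgeSet → ℕ) : Prop :=
  ∀ ℓ : G.edgeSet → Finset ℕ, (∀ e, f e ≤ (ℓ e).card) →
    ∃ φ : G.edgeSet → ℕ, (∀ e, φ e ∈ ℓ e) ∧
      ∀ e₁ e₂, lineAdj G e₁ e₂ → φ e₁ ≠ φ e₂

/-- `G ∈ G*`: any two distinct odd cycles share at most one edge. -/
def InGStar {V : Type*} (G : SimpleGraph V) : Prop :=
  ∀ (u w : V) (c₁ : G.Walk u u) (c₂ : G.Walk w w),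
    c₁.IsCycle → c₂.IsCycle → Odd c₁.length → Odd c₂.length →
    {e | e ∈ c₁.edges} ≠ {e | e ∈ c₂.edges} →
    ({e | e ∈ c₁.edges} ∩ {e | e ∈ c₂.edges}).ncard ≤ 1

/-- `G` is 2-connected: connected, and still connected after deleting any one vertex. -/
def TwoConn {V : Type*} (G : SimpleGraph V) : Prop :=
  G.Connected ∧ ∀ v : V, (G.induce {w | w ≠ v}).Connected

/-- A block of `G`: a maximal 2-connected subgraph. -/
def IsBlock {V : Type*} (G : SimpleGraph V) (B : G.Subgraph) : Prop :=
  TwoConn B.coe ∧ ∀ B' : G.Subgraph, TwoConn B'.coe → B ≤ B' → B = B'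

/-- Vertex type of the theta graph with path lengths `l`: two hubs
(`Sum.inl false`, `Sum.inl true`) plus the internal vertices of each path. -/
def ThetaVert (l : List ℕ) : Type := Bool ⊕ (Σ i : Fin l.length, Fin (l.get i - 1))

/-- The theta graph `Θ_{l₁,…,l_k}`: two hubs joined by internally disjoint paths,
the `i`-th of length `l i`. -/
def thetaGraph (l : List ℕ) : SimpleGraph (ThetaVert l) :=
  SimpleGraph.fromRel (fun a b =>
    match a, b with
    | Sum.inl false, Sum.inl true => 1 ∈ l
    | Sum.inl false, Sum.inr ⟨_, j⟩ => j.val = 0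
    | Sum.inl true, Sum.inr ⟨i, j⟩ => j.val = l.get i - 2
    | Sum.inr ⟨i, j⟩, Sum.inr ⟨i', j'⟩ => i.val = i'.val ∧ j'.val = j.val + 1
    | _, _ => False)

/-- `v` (outside `c`) touches `w ∈ c`: some `v,w`-path meets `c` only at `w`. -/
def Touches {V : Type*} (G : SimpleGraph V) {u : V} (c : G.Walk u u) (v w : V) : Prop :=
  w ∈ c.support ∧ ∃ p : G.Walk v w, p.IsPath ∧ ∀ x ∈ p.support, x ∈ c.support → x = w

/-
If `w, z ∈ T(v)` were not adjacent, joining the two touching paths gives a `w,z`-path `Q` of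
length at least two meeting `C` only in its ends. Of the two `z,w`-arcs of `C`, whose lengths add
up to the odd number `|C|`, one closes `Q` into an odd cycle. That cycle has an edge of `Q` outside
`C` and shares the whole arc with `C`, so in `G*` the arc is a single edge: `w` and `z` are
adjacent after all.
-/

namespace SimpleGraph.Walk

variable {V : Type*} {G : SimpleGraph V}

lemma ncard_setOf_mem_edges {u v : V} {p : G.Walk u v} (hp : p.IsTrail) :
    {e | e ∈ p.edges}.ncard = p.length := by
  classical
  rw [← List.coe_toFinset, Set.ncard_coe_finset, List.toFinset_card_of_nodup hp.edges_nodup,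
    length_edges]

lemma IsCycle.exists_arcs {u w z : V} {c : G.Walk u u} (hc : c.IsCycle) (hw : w ∈ c.support)
    (hz : z ∈ c.support) (hwz : w ≠ z) :
    ∃ (A : G.Walk w z) (B : G.Walk z w), A.IsPath ∧ B.IsPath ∧
      A.length + B.length = c.length ∧ A.support ⊆ c.support ∧ B.support ⊆ c.support ∧
      A.edges ⊆ c.edges ∧ B.edges ⊆ c.edges := by
  classical
  set c' := c.rotate w hw
  have hc' : c'.IsCycle := hc.rotate hw
  have hz' : z ∈ c'.support := (mem_support_rotate_iff ..).mpr hz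
  have hspec := c'.take_spec hz'
  have hB : (c'.dropUntil z hz').IsPath :=
    IsCycle.isPath_of_append_right (p := c'.takeUntil z hz') (not_nil_of_ne hwz) (by rwa [hspec])
  have hsupport : c'.support ⊆ c.support := fun x => (mem_support_rotate_iff ..).mp
  have hedges : c'.edges ⊆ c.edges := (c.rotate_edges w hw).perm.subset
  refine ⟨c'.takeUntil z hz', c'.dropUntil z hz', hc'.isPath_takeUntil hz', hB, ?_,
    List.Subset.trans (c'.support_takeUntil_subset_support hz') hsupport,
    List.Subset.trans (c'.support_dropUntil_subset_support hz') hsupport,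
    List.Subset.trans (c'.edges_takeUntil_subset_edges hz') hedges,
    List.Subset.trans (c'.edges_dropUntil_subset_edges hz') hedges⟩
  rw [← length_append, hspec, length_rotate]

lemma notMem_edges_of_forall_mem_support {a b w z : V} {Q : G.Walk w z} {p : G.Walk a b}
    (hQp : ∀ x ∈ Q.support, x ∈ p.support → x = w ∨ x = z) (hwz : ¬ G.Adj w z) :
    ∀ e ∈ Q.edges, e ∉ p.edges := by
  intro e heQ hep
  induction e using Sym2.ind with
  | h x y =>
    have hxy := Q.adj_of_mem_edges heQ
    rcases hQp x (Q.fst_mem_support_of_mem_edges heQ) (p.fst_mem_support_of_mem_edges hep)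
      with rfl | rfl <;>
    rcases hQp y (Q.snd_mem_support_of_mem_edges heQ) (p.snd_mem_support_of_mem_edges hep)
      with rfl | rfl
    all_goals first | exact hxy.ne rfl | exact hwz hxy | exact hwz hxy.symm

lemma IsPath.isCycle_append_of_support_inter {w z : V} {Q : G.Walk w z} {R : G.Walk z w}
    (hQ : Q.IsPath) (hR : R.IsPath) (hQR : ∀ x ∈ Q.support, x ∈ R.support → x = w ∨ x = z)
    (hQlen : 1 < Q.length) : (Q.append R).IsCycle := by
  refine hQ.isCycle_append hR (fun x hxQ hxR => ?_) (Or.inl hQlen)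
  rcases hQR x (List.mem_of_mem_tail hxQ) (List.mem_of_mem_tail hxR) with rfl | rfl
  · exact (List.nodup_cons.mp (Q.cons_tail_support ▸ hQ.support_nodup)).1 hxQ
  · exact (List.nodup_cons.mp (R.cons_tail_support ▸ hR.support_nodup)).1 hxR

end SimpleGraph.Walk

open SimpleGraph.Walk

lemma Touches.exists_isPath {V : Type*} {G : SimpleGraph V} {u v w z : V} {c : G.Walk u u}
    (hw : Touches G c v w) (hz : Touches G c v z) :
    ∃ Q : G.Walk w z, Q.IsPath ∧ ∀ x ∈ Q.support, x ∈ c.support → x = w ∨ x = z := by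
  classical
  obtain ⟨-, pw, -, hpw⟩ := hw
  obtain ⟨-, pz, -, hpz⟩ := hz
  refine ⟨(pw.reverse.append pz).bypass, bypass_isPath _, fun x hx hxc => ?_⟩
  rcases (mem_support_append_iff ..).mp (support_bypass_subset_support _ hx) with h | h
  · exact Or.inl (hpw x (by simpa using h) hxc)
  · exact Or.inr (hpz x h hxc)

section GStar

variable {V : Type*} {G : SimpleGraph V}

lemma InGStar.length_le_one_of_edges_subset (hG : InGStar G) {u w a b : V} {c : G.Walk u u}
    {d : G.Walk w w} (hc : c.IsCycle) (hodd : Odd c.length) (hd : d.IsCycle)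
    (hdodd : Odd d.length) (hdc : ∃ e ∈ d.edges, e ∉ c.edges) {R : G.Walk a b}
    (hR : R.IsTrail) (hRc : R.edges ⊆ c.edges) (hRd : R.edges ⊆ d.edges) : R.length ≤ 1 := by
  obtain ⟨e, hed, hec⟩ := hdc
  have hne : {e | e ∈ d.edges} ≠ {e | e ∈ c.edges} := fun h =>
    hec (h ▸ hed : e ∈ {e | e ∈ c.edges})
  calc R.length = {e | e ∈ R.edges}.ncard := (ncard_setOf_mem_edges hR).symm
    _ ≤ ({e | e ∈ d.edges} ∩ {e | e ∈ c.edges}).ncard :=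
      Set.ncard_le_ncard (fun e he => ⟨hRd he, hRc he⟩)
        (c.edges.finite_toSet.subset Set.inter_subset_right)
    _ ≤ 1 := hG w u d c hd hc hdodd hodd hne

lemma InGStar.adj_of_odd_append (hG : InGStar G) {u w z : V} {c : G.Walk u u}
    (hc : c.IsCycle) (hodd : Odd c.length) (hwz : w ≠ z) {Q : G.Walk w z} (hQ : Q.IsPath)
    (hQc : ∀ x ∈ Q.support, x ∈ c.support → x = w ∨ x = z) {R : G.Walk z w} (hR : R.IsPath)
    (hRs : R.support ⊆ c.support) (hRe : R.edges ⊆ c.edges)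
    (hpar : Odd (Q.length + R.length)) : G.Adj w z := by
  by_contra hna
  have hQlen : 1 < Q.length := by
    have h0 : Q.length ≠ 0 := fun h => hwz (eq_of_length_eq_zero h)
    have h1 : Q.length ≠ 1 := fun h => hna (adj_of_length_eq_one h)
    omega
  have hd := hQ.isCycle_append_of_support_inter hR (fun x hx hxR => hQc x hx (hRs hxR)) hQlen
  have hQe : ∃ e ∈ (Q.append R).edges, e ∉ c.edges := by
    obtain ⟨e, he⟩ := List.exists_mem_of_ne_nil Q.edges
      (List.ne_nil_of_length_pos (by rw [length_edges]; omega))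
    exact ⟨e, by simp [he], notMem_edges_of_forall_mem_support hQc hna e he⟩
  have hRlen := hG.length_le_one_of_edges_subset hc hodd hd (by rwa [length_append]) hQe
    hR.isTrail hRe (fun e he => by simp [he])
  have hR0 : R.length ≠ 0 := fun h => hwz (eq_of_length_eq_zero h).symm
  exact hna (adj_of_length_eq_one (by omega : R.length = 1)).symm

end GStar

theorem stmt8 {V : Type*} (G : SimpleGraph V) (hG : InGStar G)
    (u : V) (c : G.Walk u u) (hc : c.IsCycle) (hodd : Odd c.length) (v : V) :
    ∀ w z : V, Touches G c v w → Touches G c v z → w ≠ z → G.Adj w z := by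
  intro w z htw htz hwz
  obtain ⟨Q, hQ, hQc⟩ := htw.exists_isPath htz
  obtain ⟨A, B, hA, hB, hAB, hAs, hBs, hAe, hBe⟩ := hc.exists_arcs htw.1 htz.1 hwz
  rcases Nat.even_or_odd (Q.length + A.length) with hpar | hpar
  · refine hG.adj_of_odd_append hc hodd hwz hQ hQc hB hBs hBe ?_
    rw [Nat.odd_iff] at hodd ⊢
    rw [Nat.even_iff] at hpar
    omega
  · exact hG.adj_of_odd_append hc hodd hwz hQ hQc hA.reverse (by simpa using hAs)
      (by simpa using hAe) (by simpa using hpar)
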